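/- If u₁, ..., u_{n+1} are the vertices of a regular simplex in ℝⁿ and z₁, ..., z_{n+1} ∈ ℂ are their images under orthogonal projection onto the first two coordinates (identified with ℂ), then (z₁ + ⋯ + z_{n+1})² = (n+1)(z₁² + ⋯ + z_{n+1}²). -/

import Mathlib

open Complex Matrix

/-- A real symmetric matrix with `trace (A * A) = 0` is zero. -/
lemma aux_symm_trace_sq_zero {m : ℕ} (A : Matrix (Fin m) (Fin m) ℝ)
    (hsymm : Aᵀ = A) (h : Matrix.trace (A * A) = 0) : A = 0 := by
  have hdiag : ∀ i, (A * A) i i = ∑ k, A i k ^ 2 := by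
    intro i
    rw [Matrix.mul_apply]
    refine Finset.sum_congr rfl fun k _ => ?_
    have hk : A k i = A i k := by conv_lhs => rw [← hsymm, Matrix.transpose_apply]
    rw [hk]; ring
  have htr : ∑ i, ∑ k, A i k ^ 2 = 0 := by
    rw [← h, Matrix.trace]
    exact Finset.sum_congr rfl fun i _ => (hdiag i).symm
  ext i j
  have h1 : ∑ k : Fin m, A i k ^ 2 = 0 :=
    (Finset.sum_eq_zero_iff_of_nonneg
      (fun i _ => Finset.sum_nonneg fun k _ => sq_nonneg (A i k))).mp htr i (Finset.mem_univ i)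
  have h2 : A i j ^ 2 = 0 :=
    (Finset.sum_eq_zero_iff_of_nonneg (fun k _ => sq_nonneg (A i k))).mp h1 j (Finset.mem_univ j)
  simpa using pow_eq_zero_iff two_ne_zero |>.mp h2

/-- if `z₁, …, z_{n+1}` are the projections (first two coordinates,
identified with `ℂ`) of the vertices of a regular simplex in `ℝⁿ` (`n ≥ 2`), then
`(z₁ + ⋯ + z_{n+1})² = (n+1)(z₁² + ⋯ + z_{n+1}²)`. -/
theorem regular_simplex_projection (n : ℕ) (hn : 2 ≤ n)
    (v : Fin (n + 1) → EuclideanSpace ℝ (Fin n)) (d : ℝ) (hd : 0 < d)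
    (hreg : ∀ i j : Fin (n + 1), i ≠ j → dist (v i) (v j) = d)
    (z : Fin (n + 1) → ℂ)
    (hz : ∀ j, z j = (v j ⟨0, by omega⟩ : ℂ) + (v j ⟨1, by omega⟩ : ℂ) * Complex.I) :
    (∑ j, z j) ^ 2 = (n + 1 : ℂ) * ∑ j, (z j) ^ 2 := by
  have hn1 : ((n : ℝ) + 1) ≠ 0 := by positivity
  -- centered coordinate matrix
  set c : Fin n → ℝ := fun i => ((n : ℝ) + 1)⁻¹ * ∑ k, v k i with hc
  set W : Matrix (Fin n) (Fin (n + 1)) ℝ := Matrix.of fun i j => v j i - c i with hWdef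
  have hWa : ∀ i j, W i j = v j i - c i := fun i j => rfl
  have hrow : ∀ i, ∑ j, W i j = 0 := by
    intro i
    simp only [hWa, Finset.sum_sub_distrib, Finset.sum_const, Finset.card_univ,
      Fintype.card_fin, nsmul_eq_mul, hc]
    push_cast
    field_simp
    ring
  -- squared distances
  have hdist2 : ∀ i j : Fin (n + 1), i ≠ j → ∑ k, (W k i - W k j) ^ 2 = d ^ 2 := by
    intro i j hij
    have h1 : dist (v i) (v j) = d := hreg i j hij
    rw [EuclideanSpace.dist_eq] at h1
    have h2 : ∑ k, dist (v i k) (v j k) ^ 2 = d ^ 2 := by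
      rw [← h1, Real.sq_sqrt]
      exact Finset.sum_nonneg fun k _ => sq_nonneg _
    rw [← h2]
    refine Finset.sum_congr rfl fun k _ => ?_
    rw [hWa, hWa, Real.dist_eq, _root_.sq_abs]
    ring
    -- Gram matrix
  set lam : ℝ := d ^ 2 / 2 with hlam
  have hlam0 : lam ≠ 0 := by positivity
  set G : Matrix (Fin (n + 1)) (Fin (n + 1)) ℝ := Wᵀ * W with hGdef
  have hGa : ∀ i j, G i j = ∑ k, W k i * W k j := by
    intro i j
    rw [hGdef, Matrix.mul_apply]
    rfl
  have hGrow : ∀ i, ∑ j, G i j = 0 := by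
    intro i
    simp only [hGa]
    rw [Finset.sum_comm]
    refine Finset.sum_eq_zero fun k _ => ?_
    rw [← Finset.mul_sum, hrow k, mul_zero]
  have hpair : ∀ i j : Fin (n + 1), i ≠ j → G i i + G j j - 2 * G i j = d ^ 2 := by
    intro i j hij
    rw [← hdist2 i j hij, hGa, hGa, hGa, ← Finset.sum_add_distrib, Finset.mul_sum,
      ← Finset.sum_sub_distrib]
    exact Finset.sum_congr rfl fun k _ => by ring
  set S : ℝ := ∑ i, G i i with hSdef
  have hqval : ∀ i, ((n : ℝ) + 1) * G i i + S = n * d ^ 2 := by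
    intro i
    have hsum : ∑ j ∈ Finset.univ.erase i, (G i i + G j j - 2 * G i j)
        = ∑ j ∈ Finset.univ.erase i, d ^ 2 :=
      Finset.sum_congr rfl fun j hj => hpair i j (Ne.symm (Finset.ne_of_mem_erase hj))
    have hcard : (Finset.univ.erase i).card = n := by
      rw [Finset.card_erase_of_mem (Finset.mem_univ i)]
      simp
    have e1 : ∑ j ∈ Finset.univ.erase i, G j j = S - G i i := by
      rw [hSdef, ← Finset.sum_erase_add Finset.univ _ (Finset.mem_univ i)]
      ring
    have e2 : ∑ j ∈ Finset.univ.erase i, G i j = - G i i := by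
      have := hGrow i
      rw [← Finset.sum_erase_add Finset.univ _ (Finset.mem_univ i)] at this
      linarith
    rw [Finset.sum_sub_distrib, Finset.sum_add_distrib, Finset.sum_const, Finset.sum_const,
      hcard, e1, ← Finset.mul_sum, e2] at hsum
    simp only [nsmul_eq_mul] at hsum
    linarith
  have hqconst : ∀ i j : Fin (n + 1), G i i = G j j := by
    intro i j
    have h1 := hqval i
    have h2 := hqval j
    have h3 : ((n : ℝ) + 1) * G i i = ((n : ℝ) + 1) * G j j := by linarith
    exact mul_left_cancel₀ hn1 h3
  have hS : S = (n : ℝ) * lam := by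
    have i0 : Fin (n + 1) := ⟨0, by omega⟩
    have hSq : S = ((n : ℝ) + 1) * G i0 i0 := by
      rw [hSdef, Finset.sum_congr rfl fun j _ => hqconst j i0]
      simp [Finset.card_univ]
    have := hqval i0
    rw [hSq] at this ⊢
    rw [hlam]
    have h4 : ((n:ℝ)+1) * G i0 i0 = n * d^2 / 2 := by linarith
    rw [h4]; ring
  have hdiagval : ∀ i, ((n : ℝ) + 1) * G i i = lam * n := by
    intro i
    have := hqval i
    rw [hS, hlam] at this
    rw [hlam]
    linarith
  have hoffval : ∀ i j : Fin (n + 1), i ≠ j → ((n : ℝ) + 1) * G i j = -lam := by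
    intro i j hij
    have h1 := hpair i j hij
    have h2 := hdiagval i
    have h3 := hdiagval j
    have h4 : ((n:ℝ)+1) * (G i i + G j j - 2 * G i j) = ((n:ℝ)+1) * d ^ 2 := by rw [h1]
    rw [hlam] at h2 h3 ⊢
    linear_combination (-(1:ℝ)/2) * h4 + (1/2) * h2 + (1/2) * h3
  -- matrix form of the Gram matrix
  set J : Matrix (Fin (n + 1)) (Fin (n + 1)) ℝ := Matrix.of (fun _ _ => (1 : ℝ)) with hJdef
  set K : Matrix (Fin (n + 1)) (Fin (n + 1)) ℝ := ((n : ℝ) + 1) • 1 - J with hKdef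
  have hGK : ((n : ℝ) + 1) • G = lam • K := by
    ext i j
    by_cases hij : i = j
    · subst hij
      simp only [Matrix.smul_apply, hKdef, Matrix.sub_apply, Matrix.smul_apply,
        Matrix.one_apply_eq, hJdef, Matrix.of_apply, smul_eq_mul, mul_one]
      rw [hdiagval i]
      ring
    · simp only [Matrix.smul_apply, hKdef, Matrix.sub_apply, Matrix.smul_apply,
        Matrix.one_apply_ne hij, hJdef, Matrix.of_apply, smul_eq_mul, mul_zero]
      rw [hoffval i j hij]
      ring
  have hJJ : J * J = ((n : ℝ) + 1) • J := by
    ext i j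
    simp [hJdef, Matrix.mul_apply, Matrix.smul_apply]
  have hKK : K * K = ((n : ℝ) + 1) • K := by
    rw [hKdef]
    simp only [sub_mul, mul_sub, Matrix.smul_mul, Matrix.mul_smul, one_mul, mul_one]
    rw [hJJ]
    module
  have hGG : G * G = lam • G := by
    have h1 : (((n : ℝ) + 1) • G) * (((n : ℝ) + 1) • G) = (((n:ℝ)+1) * ((n:ℝ)+1)) • (G * G) := by
      rw [Matrix.smul_mul, Matrix.mul_smul, smul_smul]
    have h2 : (lam • K) * (lam • K) = (lam * lam) • (K * K) := by
      rw [Matrix.smul_mul, Matrix.mul_smul, smul_smul]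
    have h3 : (((n:ℝ)+1) * ((n:ℝ)+1)) • (G * G) = (((n:ℝ)+1) * ((n:ℝ)+1)) • (lam • G) := by
      have e : (((n:ℝ)+1) • G) * (((n:ℝ)+1) • G) = (lam • K) * (lam • K) := by rw [hGK]
      simp only [Matrix.smul_mul, Matrix.mul_smul, smul_smul] at e
      rw [hKK, smul_smul] at e
      rw [e, show lam * lam * ((n:ℝ)+1) = lam * ((n:ℝ)+1) * lam by ring, ← smul_smul,
        ← hGK, smul_smul, smul_smul]
      congr 1
      ring
    have hne : (((n:ℝ)+1) * ((n:ℝ)+1)) ≠ 0 := mul_ne_zero hn1 hn1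
    exact smul_right_injective _ hne h3
  -- frame operator
  set M : Matrix (Fin n) (Fin n) ℝ := W * Wᵀ with hMdef
  have hMsymm : Mᵀ = M := by
    rw [hMdef, Matrix.transpose_mul, Matrix.transpose_transpose]
  have hM3 : M * (M * M) = lam • (M * M) := by
    have e1 : M * (M * M) = W * (G * G * Wᵀ) := by
      rw [hMdef, hGdef]
      simp only [Matrix.mul_assoc]
    have e2 : M * M = W * (G * Wᵀ) := by
      rw [hMdef, hGdef]
      simp only [Matrix.mul_assoc]
    rw [e1, e2, hGG, Matrix.smul_mul, Matrix.mul_smul]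
  -- step 1: M * M = lam • M
  have hM2 : M * M = lam • M := by
    set A : Matrix (Fin n) (Fin n) ℝ := M * M - lam • M with hAdef
    have hAsymm : Aᵀ = A := by
      rw [hAdef, Matrix.transpose_sub, Matrix.transpose_mul, Matrix.transpose_smul, hMsymm]
    have hAA : A * A = 0 := by
      rw [hAdef]
      simp only [sub_mul, mul_sub, Matrix.smul_mul, Matrix.mul_smul, Matrix.mul_assoc, hM3,
        smul_smul]
      abel
    have : A = 0 := aux_symm_trace_sq_zero A hAsymm (by rw [hAA, Matrix.trace_zero])
    rw [hAdef, sub_eq_zero] at this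
    exact this
  -- trace of M
  have htrM : Matrix.trace M = (n : ℝ) * lam := by
    rw [hMdef, Matrix.trace_mul_comm, ← hGdef, ← hS]
    rfl
  -- step 2: M = lam • 1
  have hM : M = lam • (1 : Matrix (Fin n) (Fin n) ℝ) := by
    set B : Matrix (Fin n) (Fin n) ℝ := lam • 1 - M with hBdef
    have hBsymm : Bᵀ = B := by
      rw [hBdef, Matrix.transpose_sub, Matrix.transpose_smul, Matrix.transpose_one, hMsymm]
    have hBB : B * B = lam • B := by
      rw [hBdef]
      simp only [sub_mul, mul_sub, Matrix.smul_mul, Matrix.mul_smul, one_mul, mul_one, smul_sub]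
      rw [hM2]
      module
    have htrB : Matrix.trace B = 0 := by
      rw [hBdef, Matrix.trace_sub, Matrix.trace_smul, Matrix.trace_one, htrM]
      simp [Finset.card_univ]
      ring
    have : B = 0 := by
      refine aux_symm_trace_sq_zero B hBsymm ?_
      rw [hBB, Matrix.trace_smul, htrB, smul_zero]
    rw [hBdef, sub_eq_zero] at this
    exact this.symm
  -- extract the two rows
  have h1n : (1 : ℕ) < n := by omega
  set i0 : Fin n := ⟨0, by omega⟩ with hi0
  set i1 : Fin n := ⟨1, by omega⟩ with hi1
  have hi01 : i0 ≠ i1 := by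
    simp [hi0, hi1, Fin.ext_iff]
  set a : Fin (n + 1) → ℝ := fun j => W i0 j with hadef
  set b : Fin (n + 1) → ℝ := fun j => W i1 j with hbdef
  have hMa : ∀ i j : Fin n, ∑ k, W i k * W j k = lam * (if i = j then 1 else 0) := by
    intro i j
    have : M i j = (lam • (1 : Matrix (Fin n) (Fin n) ℝ)) i j := by rw [hM]
    rw [hMdef, Matrix.mul_apply] at this
    simp only [Matrix.smul_apply, Matrix.one_apply, smul_eq_mul] at this
    convert this using 2
    rfl
  have haa : ∑ j, a j ^ 2 = lam := by
    have := hMa i0 i0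
    simp only [if_true, eq_self_iff_true, ite_true, mul_one] at this
    rw [← this]
    exact Finset.sum_congr rfl fun j _ => by rw [hadef]; ring
  have hbb : ∑ j, b j ^ 2 = lam := by
    have := hMa i1 i1
    simp only [if_true, eq_self_iff_true, ite_true, mul_one] at this
    rw [← this]
    exact Finset.sum_congr rfl fun j _ => by rw [hbdef]; ring
  have hab : ∑ j, a j * b j = 0 := by
    have := hMa i0 i1
    rw [if_neg hi01, mul_zero] at this
    exact this
  have ha0 : ∑ j, a j = 0 := hrow i0
  have hb0 : ∑ j, b j = 0 := hrow i1
  -- rewrite z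
  set c0 : ℂ := (c i0 : ℂ) + (c i1 : ℂ) * I with hc0
  have hz' : ∀ j, z j = (v j i0 : ℂ) + (v j i1 : ℂ) * I := hz
  have hzj : ∀ j, z j = (a j : ℂ) + (b j : ℂ) * I + c0 := by
    intro j
    rw [hz' j, hc0]
    have e0 : (v j i0 : ℝ) = a j + c i0 := by rw [hadef]; simp [hWa]
    have e1 : (v j i1 : ℝ) = b j + c i1 := by rw [hbdef]; simp [hWa]
    rw [e0, e1]
    push_cast
    ring
  -- the sums
  have hsz : ∑ j, z j = ((n : ℂ) + 1) * c0 := by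
    simp only [hzj]
    rw [Finset.sum_add_distrib, Finset.sum_add_distrib, ← Finset.sum_mul,
      ← Complex.ofReal_sum, ← Complex.ofReal_sum, ha0, hb0]
    simp [Finset.card_univ]
  have hsz2 : ∑ j, z j ^ 2 = ((n : ℂ) + 1) * c0 ^ 2 := by
    have expand : ∀ j, z j ^ 2 = ((a j : ℂ) ^ 2 - (b j : ℂ) ^ 2) + 2 * ((a j : ℂ) * (b j : ℂ)) * I
        + 2 * c0 * (a j : ℂ) + (2 * c0 * I) * (b j : ℂ) + c0 ^ 2 := by
      intro j
      rw [hzj j]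
      linear_combination ((b j : ℂ) ^ 2) * Complex.I_sq
    have haaC : ∑ j, (a j : ℂ) ^ 2 = (lam : ℂ) := by
      rw [← haa]
      push_cast
      rfl
    have hbbC : ∑ j, (b j : ℂ) ^ 2 = (lam : ℂ) := by
      rw [← hbb]
      push_cast
      rfl
    have habC : ∑ j, (a j : ℂ) * (b j : ℂ) = 0 := by
      rw [show (0 : ℂ) = ((0 : ℝ) : ℂ) by norm_num, ← hab]
      push_cast
      rfl
    have ha0C : ∑ j, (a j : ℂ) = 0 := by
      rw [show (0 : ℂ) = ((0 : ℝ) : ℂ) by norm_num, ← ha0]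
      push_cast
      rfl
    have hb0C : ∑ j, (b j : ℂ) = 0 := by
      rw [show (0 : ℂ) = ((0 : ℝ) : ℂ) by norm_num, ← hb0]
      push_cast
      rfl
    simp only [expand, Finset.sum_add_distrib, Finset.sum_sub_distrib, ← Finset.mul_sum,
      ← Finset.sum_mul, haaC, hbbC, habC, ha0C, hb0C, Finset.sum_const, Finset.card_univ,
      Fintype.card_fin, nsmul_eq_mul]
    push_cast
    ring
  rw [hsz, hsz2]
  ring
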